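/- arXiv:2211.11338 — 2 statements merged into one kernel-verified Lean document; each statement's English description precedes it below -/
import Mathlib

section
/- Let M ∈ ℝ^{n×m} with n ≥ m have orthonormal columns, and let I be the index set produced by the DEIM algorithm applied to M (greedily selecting, at step k, the row index of maximal absolute value of the residual r = M(:,k) − M(:,1:k−1)·M(I,1:k−1)^{-1}·M(I,k)). Then at every step the selected residual entry is nonzero and the matrix M(I,1:k) is invertible; in particular the final r×r matrix M(I,:) is invertible. -/
open Matrix

/-- The submatrix `M(I, 1:k)` of the first `k` DEIM-selected rows and first `k` columns. -/
def deimSub {n r : ℕ} (M : Matrix (Fin n) (Fin r) ℝ) (I : Fin r → Fin n)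
    (k : ℕ) (hk : k ≤ r) : Matrix (Fin k) (Fin k) ℝ :=
  fun a b => M (I (Fin.castLE hk a)) (Fin.castLE hk b)

/-- The DEIM residual at step `k`:
`r = M(:,k) − M(:,1:k)·M(I,1:k)⁻¹·M(I,k)` (as a vector on `Fin n`). -/
noncomputable def deimResid {n r : ℕ} (M : Matrix (Fin n) (Fin r) ℝ) (I : Fin r → Fin n)
    (k : Fin r) : Fin n → ℝ :=
  fun i =>
    M i k - ∑ b : Fin k.1, M i (Fin.castLE k.2.le b) *
      ∑ a : Fin k.1, (deimSub M I k.1 k.2.le)⁻¹ b a * M (I (Fin.castLE k.2.le a)) k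

lemma deim_resid_ne {n r : ℕ} (M : Matrix (Fin n) (Fin r) ℝ) (hM : Mᵀ * M = 1)
    (I : Fin r → Fin n)
    (hg : ∀ (k : Fin r) (i : Fin n), |deimResid M I k i| ≤ |deimResid M I k (I k)|)
    (k : Fin r) : deimResid M I k (I k) ≠ 0 := by
  intro h
  have hall : ∀ i, deimResid M I k i = 0 := by
    intro i
    have h1 := hg k i
    rw [h, abs_zero] at h1
    exact abs_eq_zero.mp (le_antisymm h1 (abs_nonneg _))
  set c : Fin k.1 → ℝ := fun b =>
    ∑ a : Fin k.1, (deimSub M I k.1 k.2.le)⁻¹ b a * M (I (Fin.castLE k.2.le a)) k with hc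
  have hMe : ∀ i, M i k = ∑ b : Fin k.1, M i (Fin.castLE k.2.le b) * c b := by
    intro i
    have h2 := hall i
    unfold deimResid at h2
    exact sub_eq_zero.mp h2
  have horth : ∀ j j' : Fin r, (∑ i, M i j * M i j') = if j = j' then 1 else 0 := by
    intro j j'
    have h3 := congrFun (congrFun hM j) j'
    simpa [Matrix.mul_apply, Matrix.transpose_apply, Matrix.one_apply] using h3
  have hne : ∀ b : Fin k.1, k ≠ (Fin.castLE k.2.le b : Fin r) := by
    intro b hb
    have := congrArg Fin.val hb
    simp [Fin.castLE] at this
    omega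
  have h2 : (∑ i, M i k * M i k)
      = ∑ b : Fin k.1, (∑ i, M i k * M i (Fin.castLE k.2.le b)) * c b := by
    calc (∑ i, M i k * M i k)
        = ∑ i, M i k * ∑ b : Fin k.1, M i (Fin.castLE k.2.le b) * c b := by
          refine Finset.sum_congr rfl fun i _ => ?_
          rw [← hMe i]
      _ = ∑ i, ∑ b : Fin k.1, M i k * M i (Fin.castLE k.2.le b) * c b := by
          refine Finset.sum_congr rfl fun i _ => ?_
          rw [Finset.mul_sum]
          exact Finset.sum_congr rfl fun b _ => by ring
      _ = ∑ b : Fin k.1, ∑ i, M i k * M i (Fin.castLE k.2.le b) * c b := Finset.sum_comm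
      _ = ∑ b : Fin k.1, (∑ i, M i k * M i (Fin.castLE k.2.le b)) * c b := by
          refine Finset.sum_congr rfl fun b _ => ?_
          rw [Finset.sum_mul]
  have h4 : (1 : ℝ) = 0 := by
    have h5 := horth k k
    rw [if_pos rfl] at h5
    rw [← h5, h2]
    refine Finset.sum_eq_zero fun b _ => ?_
    rw [horth k (Fin.castLE k.2.le b), if_neg (hne b), zero_mul]
  norm_num at h4

lemma deim_step {n r : ℕ} (M : Matrix (Fin n) (Fin r) ℝ) (I : Fin r → Fin n) (k : Fin r)
    (hA : IsUnit (deimSub M I k.1 k.2.le))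
    (hr : deimResid M I k (I k) ≠ 0) :
    IsUnit (deimSub M I (k.1 + 1) k.2) := by
  rw [Matrix.isUnit_iff_isUnit_det, isUnit_iff_ne_zero]
  intro hdet
  obtain ⟨x, hx0, hx⟩ := (Matrix.exists_mulVec_eq_zero_iff).mpr hdet
  set A := deimSub M I k.1 k.2.le with hAdef
  set c : Fin k.1 → ℝ := fun b =>
    ∑ a : Fin k.1, A⁻¹ b a * M (I (Fin.castLE k.2.le a)) k with hc
  have hcast1 : ∀ b : Fin k.1, (Fin.castLE k.2 b.castSucc : Fin r) = Fin.castLE k.2.le b :=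
    fun b => Fin.ext rfl
  have hcast2 : (Fin.castLE k.2 (Fin.last k.1) : Fin r) = k := Fin.ext rfl
  set x' : Fin k.1 → ℝ := fun b => x b.castSucc with hx'def
  set xl := x (Fin.last k.1) with hxl
  have hrow : ∀ j : Fin (k.1 + 1),
      (∑ b : Fin k.1, M (I (Fin.castLE k.2 j)) (Fin.castLE k.2.le b) * x' b)
        + M (I (Fin.castLE k.2 j)) k * xl = 0 := by
    intro j
    have h1 := congrFun hx j
    rw [Matrix.mulVec, dotProduct] at h1
    rw [Fin.sum_univ_castSucc] at h1
    simpa [deimSub, hcast1, hcast2] using h1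
  have hdetA : IsUnit A.det := (Matrix.isUnit_iff_isUnit_det _).mp hA
  have hAx' : A *ᵥ x' = fun j => -(M (I (Fin.castLE k.2.le j)) k * xl) := by
    funext j
    have h1 := hrow j.castSucc
    rw [hcast1 j] at h1
    rw [Matrix.mulVec, dotProduct]
    have : (∑ b : Fin k.1, A j b * x' b)
        = ∑ b : Fin k.1, M (I (Fin.castLE k.2.le j)) (Fin.castLE k.2.le b) * x' b := rfl
    rw [this]
    linarith
  have hx'eq : ∀ b, x' b = -xl * c b := by
    intro b
    have h1 : A⁻¹ *ᵥ (A *ᵥ x') = x' := by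
      rw [Matrix.mulVec_mulVec, Matrix.nonsing_inv_mul _ hdetA, Matrix.one_mulVec]
    rw [hAx'] at h1
    have h2 := congrFun h1 b
    rw [Matrix.mulVec, dotProduct] at h2
    rw [← h2, hc, Finset.mul_sum]
    exact Finset.sum_congr rfl fun a _ => by ring
  have hlast := hrow (Fin.last k.1)
  rw [hcast2] at hlast
  have hresid : deimResid M I k (I k)
      = M (I k) k - ∑ b : Fin k.1, M (I k) (Fin.castLE k.2.le b) * c b := rfl
  have hxl0 : xl = 0 := by
    have h1 : xl * deimResid M I k (I k) = 0 := by
      rw [hresid]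
      have h2 : (∑ b : Fin k.1, M (I k) (Fin.castLE k.2.le b) * x' b)
          = -xl * ∑ b : Fin k.1, M (I k) (Fin.castLE k.2.le b) * c b := by
        rw [Finset.mul_sum]
        exact Finset.sum_congr rfl fun b _ => by rw [hx'eq b]; ring
      rw [h2] at hlast
      ring_nf
      ring_nf at hlast
      linarith
    rcases mul_eq_zero.mp h1 with h | h
    · exact h
    · exact absurd h hr
  apply hx0
  funext j
  induction j using Fin.lastCases with
  | last => exact hxl0
  | cast b =>
      have := hx'eq b
      rw [hxl0] at this
      simpa using this

/-- Well-definedness of DEIM (Algorithm 2): if `M ∈ ℝ^{n×r}`, `n ≥ r`, has orthonormal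
columns and `I` is a greedy DEIM index selection (at each step `k` the index `I k`
maximizes the absolute value of the residual), then at every step the selected residual
entry is nonzero and every leading submatrix `M(I,1:k)` is invertible; in particular
the final `r×r` matrix `M(I,:)` is invertible. -/
theorem deim_well_defined (n r : ℕ) (hnr : r ≤ n)
    (M : Matrix (Fin n) (Fin r) ℝ) (hM : Mᵀ * M = 1)
    (I : Fin r → Fin n)
    (hgreedy : ∀ (k : Fin r) (i : Fin n), |deimResid M I k i| ≤ |deimResid M I k (I k)|) :
    (∀ k : Fin r, deimResid M I k (I k) ≠ 0) ∧
      (∀ (k : ℕ) (hk : k ≤ r), IsUnit (deimSub M I k hk)) := by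
  refine ⟨fun k => deim_resid_ne M hM I hgreedy k, ?_⟩
  intro k
  induction k with
  | zero =>
      intro hk
      rw [Matrix.isUnit_iff_isUnit_det]
      simp [Matrix.det_isEmpty]
  | succ k ih =>
      intro hk
      have hk' : k < r := Nat.lt_of_succ_le hk
      have hA := ih hk'.le
      have hr := deim_resid_ne M hM I hgreedy ⟨k, hk'⟩
      exact deim_step M I ⟨k, hk'⟩ hA hr
end

section
/- One step of adaptive cross approximation preserves exactness on previously selected crosses and zeroes out the new pivot: let A = M − M(:,J)M(I,J)^{-1}M(I,:) be the residual after selecting index sets I, J (with M(I,J) invertible), let (i*, j*) be any pair with A_{i*,j*} ≠ 0, and set I' = I ∪ {i*}, J' = J ∪ {j*}. Then M(I',J') is invertible, and the new residual A' = M − M(:,J')M(I',J')^{-1}M(I',:) vanishes on all rows in I' and all columns in J'. -/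
/-!
Write `B = M(I,J)`. Reordering the rows and columns of `M(I',J')` puts it in block form
`[[B, u], [v, d]]` whose Schur complement `d - v B⁻¹ u` is exactly the residual entry
`A_{i*,j*}`, so `det M(I',J') = det B · A_{i*,j*}` is a unit. For any pivot block, the rows of
`M(:,J') M(I',J')⁻¹ M(I',:)` indexed by `I'` are `M(I',J') M(I',J')⁻¹ M(I',:) = M(I',:)`, and
symmetrically for the columns, so the new residual vanishes there.
-/

open Matrix

variable {R m n : Type*}

theorem submatrix_snoc_snoc_reindex {r : ℕ} (M : Matrix m n R) (I : Fin r → m) (J : Fin r → n)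
    (i : m) (j : n) :
    (M.submatrix (Fin.snoc I i) (Fin.snoc J j)).submatrix finSumFinEquiv finSumFinEquiv =
      fromBlocks (M.submatrix I J) (replicateCol (Fin 1) fun a => M (I a) j)
        (replicateRow (Fin 1) fun b => M i (J b)) (of fun _ _ => M i j) := by
  ext (a | a) (b | b) <;> simp [Fin.snoc]

variable [CommRing R]

section Residual

variable {ι : Type*} [Fintype ι] [DecidableEq ι]

noncomputable def crossResidual (M : Matrix m n R) (I : ι → m) (J : ι → n) : Matrix m n R :=
  M - M.submatrix id J * (M.submatrix I J)⁻¹ * M.submatrix I id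

variable {M : Matrix m n R} {I : ι → m} {J : ι → n}

theorem crossResidual_apply_row (h : IsUnit (M.submatrix I J).det) (a : ι) (j : n) :
    crossResidual M I J (I a) j = 0 := by
  change M (I a) j - (M.submatrix I J * (M.submatrix I J)⁻¹ * M.submatrix I id) a j = 0
  rw [mul_nonsing_inv _ h, Matrix.one_mul, submatrix_apply]
  exact sub_self _

theorem crossResidual_apply_col (h : IsUnit (M.submatrix I J).det) (i : m) (b : ι) :
    crossResidual M I J i (J b) = 0 := by
  change M i (J b) - (M.submatrix id J * (M.submatrix I J)⁻¹ * M.submatrix I J) i b = 0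
  rw [Matrix.mul_assoc, nonsing_inv_mul _ h, Matrix.mul_one, submatrix_apply]
  exact sub_self _

end Residual

theorem det_submatrix_snoc_snoc {r : ℕ} {M : Matrix m n R} {I : Fin r → m} {J : Fin r → n}
    (h : IsUnit (M.submatrix I J).det) (i : m) (j : n) :
    (M.submatrix (Fin.snoc I i) (Fin.snoc J j)).det =
      (M.submatrix I J).det * crossResidual M I J i j := by
  have := (M.submatrix I J).invertibleOfIsUnitDet h
  rw [← det_submatrix_equiv_self finSumFinEquiv, submatrix_snoc_snoc_reindex, det_fromBlocks₁₁,
    invOf_eq_nonsing_inv, det_fin_one]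
  rfl

theorem aca_step_correct_general (n m r : ℕ)
    (M : Matrix (Fin n) (Fin m) ℝ)
    (I : Fin r → Fin n) (J : Fin r → Fin m)
    (hinv : IsUnit (M.submatrix I J))
    (istar : Fin n) (jstar : Fin m)
    (hpivot :
      (M - M.submatrix id J * (M.submatrix I J)⁻¹ * M.submatrix I id) istar jstar ≠ 0) :
    IsUnit (M.submatrix (Fin.snoc I istar) (Fin.snoc J jstar)) ∧
    (∀ (a : Fin (r + 1)) (j : Fin m),
      (M - M.submatrix id (Fin.snoc J jstar) *
          (M.submatrix (Fin.snoc I istar) (Fin.snoc J jstar))⁻¹ *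
          M.submatrix (Fin.snoc I istar) id) ((Fin.snoc I istar : Fin (r+1) → Fin n) a) j = 0) ∧
    (∀ (i : Fin n) (b : Fin (r + 1)),
      (M - M.submatrix id (Fin.snoc J jstar) *
          (M.submatrix (Fin.snoc I istar) (Fin.snoc J jstar))⁻¹ *
          M.submatrix (Fin.snoc I istar) id) i ((Fin.snoc J jstar : Fin (r+1) → Fin m) b) = 0) := by
  have hB : IsUnit (M.submatrix I J).det := (isUnit_iff_isUnit_det _).1 hinv
  have hN : IsUnit (M.submatrix (Fin.snoc I istar) (Fin.snoc J jstar)).det := by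
    rw [det_submatrix_snoc_snoc hB]
    exact hB.mul (isUnit_iff_ne_zero.2 hpivot)
  exact ⟨(isUnit_iff_isUnit_det _).2 hN, crossResidual_apply_row hN, crossResidual_apply_col hN⟩

/-- One ACA step: if `A = M − M(:,J)M(I,J)⁻¹M(I,:)` is the current residual with
`M(I,J)` invertible and `A_{i*,j*} ≠ 0`, then after appending the pivot `(i*, j*)`
the enlarged pivot block `M(I',J')` is invertible and the new residual vanishes on
all rows in `I'` and all columns in `J'`. -/
theorem aca_step_correct (n m r : ℕ)
    (M : Matrix (Fin n) (Fin m) ℝ)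
    (I : Fin r → Fin n) (J : Fin r → Fin m)
    (hI : Function.Injective I) (hJ : Function.Injective J)
    (hinv : IsUnit (M.submatrix I J))
    (istar : Fin n) (jstar : Fin m)
    (hpivot :
      (M - M.submatrix id J * (M.submatrix I J)⁻¹ * M.submatrix I id) istar jstar ≠ 0) :
    IsUnit (M.submatrix (Fin.snoc I istar) (Fin.snoc J jstar)) ∧
    (∀ (a : Fin (r + 1)) (j : Fin m),
      (M - M.submatrix id (Fin.snoc J jstar) *
          (M.submatrix (Fin.snoc I istar) (Fin.snoc J jstar))⁻¹ *
          M.submatrix (Fin.snoc I istar) id) ((Fin.snoc I istar : Fin (r+1) → Fin n) a) j = 0) ∧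
    (∀ (i : Fin n) (b : Fin (r + 1)),
      (M - M.submatrix id (Fin.snoc J jstar) *
          (M.submatrix (Fin.snoc I istar) (Fin.snoc J jstar))⁻¹ *
          M.submatrix (Fin.snoc I istar) id) i ((Fin.snoc J jstar : Fin (r+1) → Fin m) b) = 0) :=
  aca_step_correct_general n m r M I J hinv istar jstar hpivot
end
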